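/- Let G be an r-regular simple graph with n vertices and m ≥ 1 edges, and let q_1 ≤ q_2 ≤ … ≤ q_n = 2r be the eigenvalues of Q(G) listed with multiplicity. Then f(λ, G^{-11}) = [(λ-2m-n+2)(λ-m-2n+2r+2) - mn]·(λ-m-n+2)^{m-1}·∏_{i=1}^{n-1}(λ - m - n + 2 + q_i). -/

import Mathlib

open Classical

/-- The four symbols `0, 1, +, -` used in `xyz`-transformations. -/
inductive XYZ : Type
  | zero | one | plus | minus

namespace XYZ

/-- The relation on the vertices of a graph `H` given by a symbol:
`0` gives the empty graph, `1` the complete graph, `+` the graph itself,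
`-` its complement. -/
def rel {W : Type*} (H : SimpleGraph W) : XYZ → W → W → Prop
  | .zero => fun _ _ => False
  | .one  => fun u v => u ≠ v
  | .plus => fun u v => H.Adj u v
  | .minus => fun u v => u ≠ v ∧ ¬ H.Adj u v

/-- The incidence relation between a vertex and an edge given by a symbol `z`:
`+` means incident, `-` means non-incident, `0` never, `1` always. -/
def inc {W : Type*} (G : SimpleGraph W) : XYZ → W → G.edgeSet → Prop
  | .zero => fun _ _ => False
  | .one  => fun _ _ => True
  | .plus => fun v e => v ∈ (e : Sym2 W)
  | .minus => fun v e => v ∉ (e : Sym2 W)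

theorem rel_symm {W : Type*} (H : SimpleGraph W) (x : XYZ) {u v : W}
    (h : rel H x u v) : rel H x v u := by
  cases x with
  | zero => exact h.elim
  | one => exact (h : u ≠ v).symm
  | plus => exact H.adj_symm h
  | minus => exact ⟨(h.1).symm, fun h' => h.2 (H.adj_symm h')⟩

theorem rel_irrefl {W : Type*} (H : SimpleGraph W) (x : XYZ) {u : W}
    (h : rel H x u u) : False := by
  cases x with
  | zero => exact h
  | one => exact h rfl
  | plus => exact H.ne_of_adj h rfl
  | minus => exact h.1 rfl

end XYZ

/-- The `xyz`-transformation `G^{xyz}` of a graph `G`: its vertex set is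
`V(G) ⊕ E(G)`; two vertices of `G` are adjacent according to the symbol `x`
(applied to `G`), two edges according to the symbol `y` (applied to the line
graph of `G`), and a vertex and an edge according to the symbol `z`
(`+` = incidence graph `B(G)`, `-` = non-incidence graph `B^c(G)`,
`0` = no vertex-edge edges, `1` = all vertex-edge edges). -/
def xyzTransform {V : Type*} (G : SimpleGraph V) (x y z : XYZ) :
    SimpleGraph (V ⊕ G.edgeSet) where
  Adj a b :=
    match a, b with
    | Sum.inl u, Sum.inl v => XYZ.rel G x u v
    | Sum.inr e, Sum.inr f => XYZ.rel G.lineGraph y e f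
    | Sum.inl v, Sum.inr e => XYZ.inc G z v e
    | Sum.inr e, Sum.inl v => XYZ.inc G z v e
  symm := ⟨by
    rintro (u | e) (v | f) h
    · exact XYZ.rel_symm G x h
    · exact h
    · exact h
    · exact XYZ.rel_symm G.lineGraph y h⟩
  loopless := ⟨by
    rintro (u | e) h
    · exact XYZ.rel_irrefl G x h
    · exact XYZ.rel_irrefl G.lineGraph y h⟩

/-- The signless Laplacian matrix `Q(G) = D(G) + A(G)` of a graph. -/
noncomputable def signlessLaplacian {V : Type*} [Fintype V] (G : SimpleGraph V) :
    Matrix V V ℝ :=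
  Matrix.of fun u v =>
    (if u = v then (G.degree u : ℝ) else 0) + (if G.Adj u v then 1 else 0)

/-- The signless Laplacian characteristic polynomial
`f(λ, G) = det (λ I - Q(G))`, evaluated at a real number `λ`. -/
noncomputable def fQ {V : Type*} [Fintype V] (G : SimpleGraph V) (lam : ℝ) : ℝ :=
  Matrix.det (lam • (1 : Matrix V V ℝ) - signlessLaplacian G)


/-!
With `μ = λ - m - n + 2`, the degrees in `G^{-11}` (namely `n - 1 - r + m` on vertices and
`m - 1 + n` on edges) give `λI - Q(G^{-11}) = diag((μ + r)I + A(G), μI) - J`. Both diagonal blocks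
have constant row sums, `μ + 2r` and `μ`, so the matrix determinant lemma evaluates the determinant
as `det((μ + r)I + A(G)) · μ^m · (1 - n / (μ + 2r) - m / μ)`. As `Q(G) = rI + A(G)`, the first factor
is `∏ (μ + q_i)`, whose factor `μ + q_n = μ + 2r` cancels the denominator. This proves the identity
off finitely many `λ`, hence everywhere by continuity.
-/

open Matrix SimpleGraph

theorem det_sub_of_mulVec_eq_one {ι K : Type*} [Fintype ι] [DecidableEq ι] [Field K]
    {M : Matrix ι ι K} (hM : M.det ≠ 0) {w : ι → K} (hw : M *ᵥ w = 1) :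
    (M - of fun _ _ => 1).det = M.det * (1 - ∑ i, w i) := by
  have hJ : M - of (fun _ _ => 1) =
      M + replicateCol Unit (-1 : ι → K) * replicateRow Unit (1 : ι → K) := by
    ext i j
    simp [mul_apply, sub_eq_add_neg]
  have hinv : M⁻¹ *ᵥ 1 = w := by
    rw [← hw, mulVec_mulVec, nonsing_inv_mul _ hM.isUnit, one_mulVec]
  rw [hJ, det_add_replicateCol_mul_replicateRow hM.isUnit]
  congr 1
  rw [det_unique, Matrix.mul_assoc, ← replicateCol_mulVec, mulVec_neg, hinv, Matrix.add_apply,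
    replicateRow_mul_replicateCol_apply]
  simp [dotProduct, sub_eq_add_neg]

theorem det_fromBlocks_sub_of_mulVec_eq_smul {α β K : Type*} [Fintype α] [Fintype β]
    [DecidableEq α] [DecidableEq β] [Field K] {B : Matrix α α K} {b : K}
    (hB : B *ᵥ 1 = b • 1) (hb : b ≠ 0) (hdet : B.det ≠ 0) {μ : K} (hμ : μ ≠ 0) :
    (fromBlocks B 0 0 (μ • 1 : Matrix β β K) - of fun _ _ => 1).det =
      B.det * μ ^ Fintype.card β * (1 - Fintype.card α / b - Fintype.card β / μ) := by
  have hdet₀ : (fromBlocks B 0 0 (μ • 1 : Matrix β β K)).det = B.det * μ ^ Fintype.card β := by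
    rw [det_fromBlocks_zero₂₁, det_smul, det_one, mul_one]
  have hw : fromBlocks B 0 0 (μ • 1 : Matrix β β K) *ᵥ Sum.elim (b⁻¹ • 1) (μ⁻¹ • 1) = 1 := by
    ext (i | i) <;>
      simp [fromBlocks_mulVec, mulVec_smul, hB, smul_mulVec, smul_smul, hb, hμ]
  rw [det_sub_of_mulVec_eq_one (hdet₀ ▸ mul_ne_zero hdet (pow_ne_zero _ hμ)) hw, hdet₀,
    Fintype.sum_sum_type]
  simp [div_eq_mul_inv, sub_sub]

theorem Fin.prod_univ_eq_prod_castLE_mul {M : Type*} [CommMonoid M] {n : ℕ} (hn : 0 < n)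
    (f : Fin n → M) :
    ∏ i, f i = (∏ i : Fin (n - 1), f (Fin.castLE (Nat.sub_le n 1) i)) * f ⟨n - 1, by omega⟩ := by
  obtain ⟨k, rfl⟩ := Nat.exists_eq_add_of_lt hn
  exact Fin.prod_univ_castSucc f

-- `fQ` is elaborated with the classical `DecidableEq` instance, not the one at hand.
theorem fQ_eq_det {V : Type*} [Fintype V] [DecidableEq V] (G : SimpleGraph V) (lam : ℝ) :
    fQ G lam = (lam • (1 : Matrix V V ℝ) - signlessLaplacian G).det := by
  unfold fQ
  congr!

theorem continuous_fQ {V : Type*} [Fintype V] (G : SimpleGraph V) : Continuous (fQ G) := by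
  unfold fQ
  fun_prop

section Regular

variable {V : Type*} [Fintype V] {G : SimpleGraph V} {r : ℕ}

theorem signlessLaplacian_eq_of_isRegularOfDegree (hreg : G.IsRegularOfDegree r) :
    signlessLaplacian G = (r : ℝ) • 1 + G.adjMatrix ℝ := by
  ext u v
  by_cases huv : u = v
  · subst huv
    simp [signlessLaplacian, hreg u]
  · simp [signlessLaplacian, huv, adjMatrix_apply]

theorem smul_one_add_adjMatrix_mulVec_one (hreg : G.IsRegularOfDegree r) (a : ℝ) :
    (a • 1 + G.adjMatrix ℝ) *ᵥ 1 = (a + r) • 1 := by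
  ext v
  simp [add_mulVec, smul_mulVec, hreg v]

theorem det_smul_one_add_adjMatrix_eq_prod {n : ℕ} (hn : Fintype.card V = n)
    (hreg : G.IsRegularOfDegree r) {q : Fin n → ℝ} (hq : ∀ x, fQ G x = ∏ i, (x - q i)) (μ : ℝ) :
    ((μ + r) • 1 + G.adjMatrix ℝ).det = ∏ i, (μ + q i) := by
  have h := hq (-μ)
  rw [fQ, signlessLaplacian_eq_of_isRegularOfDegree hreg,
    show (-μ) • 1 - ((r : ℝ) • 1 + G.adjMatrix ℝ) = (-1 : ℝ) • ((μ + r) • 1 + G.adjMatrix ℝ) by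
      module, det_smul, hn] at h
  simp_rw [← neg_add', Finset.prod_neg, Finset.card_univ, Fintype.card_fin] at h
  exact mul_left_cancel₀ (pow_ne_zero n (by norm_num)) h

theorem cast_degree_compl_of_isRegularOfDegree (hreg : G.IsRegularOfDegree r) (v : V) :
    (Gᶜ.degree v : ℝ) = Fintype.card V - 1 - r := by
  have hlt := G.degree_lt_card_verts v
  rw [hreg v] at hlt
  rw [degree_compl, hreg v, Nat.cast_sub (by omega), Nat.cast_sub (by omega), Nat.cast_one]

end Regular

section MinusOneOne

variable {V : Type*} [Fintype V] {G : SimpleGraph V} {r : ℕ}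

variable (G) in
theorem degree_xyzTransform_minus_one_one_inl (v : V) :
    (xyzTransform G .minus .one .one).degree (Sum.inl v) =
      Gᶜ.degree v + Fintype.card G.edgeSet := by
  rw [← card_neighborSet_eq_degree, ← card_neighborSet_eq_degree, ← Fintype.card_sum]
  refine Fintype.card_congr (Equiv.subtypeSum.trans (Equiv.sumCongr ?_ ?_))
  · exact Equiv.subtypeEquivRight fun u => by
      simp [xyzTransform, XYZ.rel, compl_adj]
  · exact Equiv.subtypeUnivEquiv fun _ => trivial

variable (G) in
theorem degree_xyzTransform_minus_one_one_inr (e : G.edgeSet) :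
    (xyzTransform G .minus .one .one).degree (Sum.inr e) =
      Fintype.card V + (Fintype.card G.edgeSet - 1) := by
  have hcard : Fintype.card {f : G.edgeSet // e ≠ f} = Fintype.card G.edgeSet - 1 := by
    rw [Fintype.card_subtype_compl, Fintype.card_subtype_eq']
  rw [← card_neighborSet_eq_degree, ← hcard, ← Fintype.card_sum]
  refine Fintype.card_congr (Equiv.subtypeSum.trans (Equiv.sumCongr ?_ ?_))
  · exact Equiv.subtypeUnivEquiv fun _ => trivial
  · exact Equiv.subtypeEquivRight fun f => by
      simp [xyzTransform, XYZ.rel]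

theorem signlessLaplacian_xyzTransform_minus_one_one (hreg : G.IsRegularOfDegree r) :
    signlessLaplacian (xyzTransform G .minus .one .one) =
      fromBlocks ((Fintype.card G.edgeSet + Fintype.card V - 2 - r : ℝ) • 1 - G.adjMatrix ℝ) 0 0
        ((Fintype.card G.edgeSet + Fintype.card V - 2 : ℝ) • 1) + of fun _ _ => 1 := by
  ext (u | e) (v | f)
  · by_cases huv : u = v
    · subst huv
      simp [signlessLaplacian, degree_xyzTransform_minus_one_one_inl,
        cast_degree_compl_of_isRegularOfDegree hreg]
      ring
    · by_cases hadj : G.Adj u v <;>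
        simp [signlessLaplacian, xyzTransform, XYZ.rel, huv, hadj]
  · simp [signlessLaplacian, xyzTransform, XYZ.inc]
  · simp [signlessLaplacian, xyzTransform, XYZ.inc]
  · by_cases hef : e = f
    · subst hef
      have hdeg : ((xyzTransform G .minus .one .one).degree (.inr e) : ℝ) =
          Fintype.card V + Fintype.card G.edgeSet - 1 := by
        rw [degree_xyzTransform_minus_one_one_inr, Nat.cast_add,
          Nat.cast_sub (Fintype.card_pos_iff.2 ⟨e⟩), Nat.cast_one, add_sub_assoc]
      simp [signlessLaplacian, hdeg]
      ring
    · simp [signlessLaplacian, xyzTransform, XYZ.rel, hef]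

theorem fQ_xyzTransform_minus_one_one (hreg : G.IsRegularOfDegree r) (lam : ℝ) :
    fQ (xyzTransform G .minus .one .one) lam =
      (fromBlocks
          ((lam - Fintype.card G.edgeSet - Fintype.card V + 2 + r) • 1 + G.adjMatrix ℝ) 0 0
          ((lam - Fintype.card G.edgeSet - Fintype.card V + 2) • 1 : Matrix G.edgeSet _ ℝ) -
        of fun _ _ => 1).det := by
  rw [fQ_eq_det, signlessLaplacian_xyzTransform_minus_one_one hreg]
  congr 1
  ext (u | e) (v | f) <;> simp [one_apply] <;> split_ifs <;> ring

end MinusOneOne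

theorem signless_charpoly_xyz_m11 {V : Type*} [Fintype V] (G : SimpleGraph V) (r n m : ℕ)
    (hn : Fintype.card V = n) (hm : Fintype.card G.edgeSet = m)
    (hreg : G.IsRegularOfDegree r) (hm1 : 1 ≤ m) (hn0 : 0 < n)
    (q : Fin n → ℝ)
    (hlast : q ⟨n - 1, by omega⟩ = 2 * r)
    (hq : ∀ x : ℝ, fQ G x = ∏ i : Fin n, (x - q i)) :
    ∀ lam : ℝ,
      fQ (xyzTransform G XYZ.minus XYZ.one XYZ.one) lam =
        ((lam - 2 * m - n + 2) * (lam - m - 2 * n + 2 * r + 2) - m * n) *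
          (lam - m - n + 2) ^ (m - 1) *
          ∏ i : Fin (n - 1), (lam - m - n + 2 + q (Fin.castLE (Nat.sub_le n 1) i)) := by
  have hS : (insert (m + n - 2 : ℝ) (Set.range fun i => m + n - 2 - q i)).Finite :=
    (Set.finite_range _).insert _
  refine congrFun ((continuous_fQ _).ext_on (hS.countable.dense_compl ℝ) (by fun_prop)
    fun lam hlam => ?_)
  simp only [Set.mem_compl_iff, Set.mem_insert_iff, Set.mem_range, not_or, not_exists] at hlam
  rw [fQ_xyzTransform_minus_one_one hreg, hn, hm]
  set μ := lam - m - n + 2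
  have hμ : μ ≠ 0 := fun h => hlam.1 (by linarith)
  have hqμ (i) : μ + q i ≠ 0 := fun h => hlam.2 i (by linarith)
  have hdet := det_smul_one_add_adjMatrix_eq_prod hn hreg hq μ
  have hdet_ne : ((μ + r) • 1 + G.adjMatrix ℝ).det ≠ 0 :=
    hdet ▸ Finset.prod_ne_zero_iff.2 fun i _ => hqμ i
  have h2r : μ + r + r ≠ 0 := by
    simpa [hlast, two_mul, add_assoc] using hqμ ⟨_, Nat.sub_lt hn0 one_pos⟩
  rw [det_fromBlocks_sub_of_mulVec_eq_smul (smul_one_add_adjMatrix_mulVec_one hreg _) h2r hdet_ne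
    hμ, hdet, Fin.prod_univ_eq_prod_castLE_mul hn0, hlast, ← pow_sub_one_mul (by omega), hn, hm]
  field_simp
  ring
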